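/- Let T : ℝⁿ → ℝⁿ be a one-player Shapley operator such that T(u) = λe + u for some u ∈ ℝⁿ and λ ∈ ℝ. If there is a unique probability vector m such that ⟨m, r^τ⟩ = λ and m ∈ M(P^τ) for some deterministic policy τ, then the eigenvector of T is unique up to an additive constant: every v ∈ ℝⁿ with T(v) = λe + v satisfies v = u + ce for some c ∈ ℝ. -/

import Mathlib

/-!
Let `w = v - u`, let `τ` be optimal at `v` and `σ` optimal at `u`. Then `w ≤ P^τ w` and
`P^σ w ≤ w`, so by the maximum principle the argmax set of `w` is closed under `P^τ` and its
argmin set is closed under `P^σ`. Each of these closed sets carries an invariant probability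
vector of the corresponding policy, and every invariant probability vector of a policy that is
optimal at an eigenvector has value `λ`. By uniqueness both are the same vector `m`, so any
point of the support of `m` is at the same time a maximum and a minimum of `w`.
-/

/-- One-player Shapley operator `T_i(x) = max_{b ∈ B i} ( r i b + ⟨P i b, x⟩ )`. -/
noncomputable def onePlayerOp {n : ℕ} (B : Fin n → Type) [∀ i, Fintype (B i)]
    [∀ i, Nonempty (B i)] (r : ∀ i, B i → ℝ) (P : ∀ i, B i → Fin n → ℝ) :
    (Fin n → ℝ) → (Fin n → ℝ) :=
  fun x i => ⨆ b : B i, (r i b + ∑ j, P i b j * x j)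

/-- `m` is an invariant probability vector of the stochastic matrix `Q` (rows `Q i`). -/
def isInvProb {n : ℕ} (Q : Fin n → Fin n → ℝ) (m : Fin n → ℝ) : Prop :=
  (∀ i, 0 ≤ m i) ∧ (∑ i, m i) = 1 ∧ ∀ j, ∑ i, m i * Q i j = m j

open Finset

namespace Matrix

section RowStochastic

variable {ι : Type*} [Fintype ι] [DecidableEq ι] {Q : Matrix ι ι ℝ}

/-- `1 - Q` kills the all-ones vector, hence is singular, hence has a nonzero left kernel. -/
lemma exists_ne_zero_vecMul_eq_self [Nonempty ι] (hQ : Q *ᵥ 1 = 1) :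
    ∃ y ≠ 0, y ᵥ* Q = y := by
  have hdet : (1 - Q).det = 0 :=
    exists_mulVec_eq_zero_iff.1 ⟨1, one_ne_zero, by rw [sub_mulVec, one_mulVec, hQ, sub_self]⟩
  obtain ⟨y, hy, hyQ⟩ := exists_vecMul_eq_zero_iff.2 hdet
  rw [vecMul_sub, vecMul_one, sub_eq_zero] at hyQ
  exact ⟨y, hy, hyQ.symm⟩

/-- The triangle inequality gives `|y| ≤ |y| ᵥ* Q`, and both sides have the same total mass. -/
lemma abs_vecMul_eq_self_of_mem_rowStochastic (hQ : Q ∈ rowStochastic ℝ ι) {y : ι → ℝ}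
    (hy : y ᵥ* Q = y) : |y| ᵥ* Q = |y| := by
  have hle : ∀ j ∈ univ, |y| j ≤ (|y| ᵥ* Q) j := fun j _ => by
    calc |y| j = |∑ i, y i * Q i j| := congrArg abs (congrFun hy j).symm
      _ ≤ ∑ i, |y i * Q i j| := abs_sum_le_sum_abs _ _
      _ = (|y| ᵥ* Q) j := by
        simp only [abs_mul, abs_of_nonneg (hQ.1 _ _)]; rfl
  have hsum : ∑ j, |y| j = ∑ j, (|y| ᵥ* Q) j := by
    simp only [← dotProduct_one, ← dotProduct_mulVec, hQ.2]
  funext j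
  exact ((sum_eq_sum_iff_of_le hle).1 hsum j (mem_univ j)).symm

lemma exists_mem_stdSimplex_vecMul_eq_self [Nonempty ι] (hQ : Q ∈ rowStochastic ℝ ι) :
    ∃ m ∈ stdSimplex ℝ ι, m ᵥ* Q = m := by
  obtain ⟨y, hy, hyQ⟩ := exists_ne_zero_vecMul_eq_self hQ.2
  have hpos : 0 < ∑ i, |y i| := by
    obtain ⟨i, hi⟩ := Function.ne_iff.1 hy
    exact sum_pos' (fun j _ => abs_nonneg (y j)) ⟨i, mem_univ i, abs_pos.2 hi⟩
  refine ⟨(∑ i, |y i|)⁻¹ • |y|, ⟨fun i => ?_, ?_⟩, ?_⟩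
  · simp only [Pi.smul_apply, Pi.abs_apply, smul_eq_mul]
    positivity
  · simp only [Pi.smul_apply, Pi.abs_apply, smul_eq_mul, ← mul_sum]
    exact inv_mul_cancel₀ hpos.ne'
  · rw [smul_vecMul, abs_vecMul_eq_self_of_mem_rowStochastic hQ hyQ]

/-- Restricted to a closed set `S`, `Q` is again stochastic. -/
lemma exists_mem_stdSimplex_vecMul_eq_self_of_closed (hQ : Q ∈ rowStochastic ℝ ι)
    {S : Finset ι} (hS : S.Nonempty) (hclosed : ∀ i ∈ S, ∀ j, Q i j ≠ 0 → j ∈ S) :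
    ∃ m ∈ stdSimplex ℝ ι, m ᵥ* Q = m ∧ ∀ i ∉ S, m i = 0 := by
  have hzero : ∀ i ∈ S, ∀ j ∉ S, Q i j = 0 := fun i hi j hj =>
    by_contra fun hne => hj (hclosed i hi j hne)
  have hQS : Q.submatrix ((↑) : S → ι) (↑) ∈ rowStochastic ℝ S := by
    refine mem_rowStochastic_iff_sum.2 ⟨fun i j => hQ.1 _ _, fun i => ?_⟩
    change ∑ j : S, Q i j = 1
    rw [sum_coe_sort S (Q i), ← sum_row_of_mem_rowStochastic hQ i]
    exact sum_subset (subset_univ S) fun j _ hj => hzero i i.2 j hj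
  have := hS.to_subtype
  obtain ⟨m', ⟨hm'0, hm'1⟩, hm'Q⟩ := exists_mem_stdSimplex_vecMul_eq_self hQS
  set m : ι → ℝ := fun i => if h : i ∈ S then m' ⟨i, h⟩ else 0 with hm
  have hmS : ∀ i ∉ S, m i = 0 := fun i hi => dif_neg hi
  have hsum : ∀ f : ι → ℝ, ∑ i, m i * f i = ∑ i : S, m' i * f i := fun f => by
    rw [← sum_subset (subset_univ S) fun i _ hi => by rw [hmS i hi, zero_mul],
      ← sum_coe_sort S]
    exact sum_congr rfl fun i _ => by simp [hm]
  refine ⟨m, ⟨fun i => ?_, by simpa only [Pi.one_apply, mul_one, hm'1] using hsum 1⟩,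
    funext fun j => ?_, hmS⟩
  · by_cases hi : i ∈ S
    · simpa [hm, hi] using hm'0 ⟨i, hi⟩
    · rw [hmS i hi]
  · change ∑ i, m i * Q i j = m j
    rw [hsum]
    by_cases hj : j ∈ S
    · rw [show m j = m' ⟨j, hj⟩ from dif_pos hj, ← congrFun hm'Q ⟨j, hj⟩]
      rfl
    · rw [hmS j hj]
      exact sum_eq_zero fun i _ => by rw [hzero i i.2 j hj, mul_zero]

/-- Maximum principle for `Q`-subharmonic vectors. -/
lemma apply_eq_of_le_mulVec_of_forall_le (hQ : Q ∈ rowStochastic ℝ ι) {w : ι → ℝ} {i j : ι}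
    (hmax : ∀ k, w k ≤ w i) (hi : w i ≤ (Q *ᵥ w) i) (hij : Q i j ≠ 0) : w j = w i := by
  have hnonneg : ∀ k ∈ univ, 0 ≤ Q i k * (w i - w k) := fun k _ =>
    mul_nonneg (hQ.1 i k) (sub_nonneg.2 (hmax k))
  have hsum : ∑ k, Q i k * (w i - w k) = w i - (Q *ᵥ w) i := by
    simp only [mul_sub, sum_sub_distrib, ← sum_mul, sum_row_of_mem_rowStochastic hQ, one_mul]
    rfl
  have hzero : ∑ k, Q i k * (w i - w k) = 0 :=
    le_antisymm (by linarith) (sum_nonneg hnonneg)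
  have := (sum_eq_zero_iff_of_nonneg hnonneg).1 hzero j (mem_univ j)
  rcases mul_eq_zero.1 this with h | h
  · exact absurd h hij
  · linarith

lemma exists_mem_stdSimplex_vecMul_eq_self_of_le_mulVec [Nonempty ι]
    (hQ : Q ∈ rowStochastic ℝ ι) {w : ι → ℝ} (hw : w ≤ Q *ᵥ w) :
    ∃ m ∈ stdSimplex ℝ ι, m ᵥ* Q = m ∧ ∀ i, m i ≠ 0 → ∀ j, w j ≤ w i := by
  obtain ⟨i₀, hi₀⟩ := Finite.exists_max w
  let S : Finset ι := univ.filter fun i => w i = w i₀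
  have hclosed : ∀ i ∈ S, ∀ j, Q i j ≠ 0 → j ∈ S := fun i hi j hij => by
    have hi : w i = w i₀ := (mem_filter.1 hi).2
    refine mem_filter.2 ⟨mem_univ j, ?_⟩
    rw [← hi]
    exact apply_eq_of_le_mulVec_of_forall_le hQ (hi ▸ hi₀) (hw i) hij
  obtain ⟨m, hm, hmQ, hmS⟩ :=
    exists_mem_stdSimplex_vecMul_eq_self_of_closed hQ ⟨i₀, by simp [S]⟩ hclosed
  refine ⟨m, hm, hmQ, fun i hi j => ?_⟩
  have hiS : i ∈ S := by_contra fun h => hi (hmS i h)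
  rw [(mem_filter.1 hiS).2]
  exact hi₀ j

lemma exists_mem_stdSimplex_vecMul_eq_self_of_mulVec_le [Nonempty ι]
    (hQ : Q ∈ rowStochastic ℝ ι) {w : ι → ℝ} (hw : Q *ᵥ w ≤ w) :
    ∃ m ∈ stdSimplex ℝ ι, m ᵥ* Q = m ∧ ∀ i, m i ≠ 0 → ∀ j, w i ≤ w j := by
  obtain ⟨m, hm, hmQ, hmin⟩ := exists_mem_stdSimplex_vecMul_eq_self_of_le_mulVec hQ
    (w := -w) (by rw [mulVec_neg]; exact neg_le_neg hw)
  exact ⟨m, hm, hmQ, fun i hi j => neg_le_neg_iff.1 (hmin i hi j)⟩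

end RowStochastic

lemma dotProduct_eq_of_vecMul_eq_self {ι : Type*} [Fintype ι] {Q : Matrix ι ι ℝ}
    {m c v : ι → ℝ} {lam : ℝ} (hm : ∑ i, m i = 1) (hmQ : m ᵥ* Q = m)
    (h : ∀ i, c i + (Q *ᵥ v) i = lam + v i) : m ⬝ᵥ c = lam := by
  have hpair : m ⬝ᵥ (c + Q *ᵥ v) = m ⬝ᵥ ((fun _ => lam) + v) := congrArg _ (funext h)
  rw [dotProduct_add, dotProduct_add, dotProduct_mulVec, hmQ] at hpair
  have hconst : m ⬝ᵥ (fun _ => lam) = lam := by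
    simp only [dotProduct, ← sum_mul, hm, one_mul]
  linarith

end Matrix

open Matrix

section OnePlayer

variable {n : ℕ} {B : Fin n → Type} {r : ∀ i, B i → ℝ} {P : ∀ i, B i → Fin n → ℝ}

/-- The transition matrix `P^τ` of a deterministic policy `τ`. -/
def policyMatrix (P : ∀ i, B i → Fin n → ℝ) (τ : ∀ i, B i) : Matrix (Fin n) (Fin n) ℝ :=
  Matrix.of fun i j => P i (τ i) j

lemma policyMatrix_mem_rowStochastic (hP : ∀ i b, (∀ j, 0 ≤ P i b j) ∧ ∑ j, P i b j = 1)
    (τ : ∀ i, B i) : policyMatrix P τ ∈ rowStochastic ℝ (Fin n) :=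
  mem_rowStochastic_iff_sum.2 ⟨fun i j => (hP i (τ i)).1 j, fun i => (hP i (τ i)).2⟩

lemma isInvProb_iff {Q : Fin n → Fin n → ℝ} {m : Fin n → ℝ} :
    isInvProb Q m ↔ m ∈ stdSimplex ℝ (Fin n) ∧ m ᵥ* Matrix.of Q = m := by
  simp [isInvProb, stdSimplex, funext_iff, vecMul, dotProduct, and_assoc]

variable [∀ i, Fintype (B i)] [∀ i, Nonempty (B i)]

lemma le_onePlayerOp (v : Fin n → ℝ) (i : Fin n) (b : B i) :
    r i b + ∑ j, P i b j * v j ≤ onePlayerOp B r P v i :=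
  le_ciSup (f := fun b : B i => r i b + ∑ j, P i b j * v j) (Finite.bddAbove_range _) b

lemma exists_policy_onePlayerOp_eq (v : Fin n → ℝ) :
    ∃ τ : ∀ i, B i, ∀ i, r i (τ i) + (policyMatrix P τ *ᵥ v) i = onePlayerOp B r P v i := by
  choose τ hτ using fun i => exists_eq_ciSup_of_finite (f := fun b : B i =>
    r i b + ∑ j, P i b j * v j)
  exact ⟨τ, hτ⟩

lemma onePlayerOp_sub_le_mulVec {τ : ∀ i, B i} {v : Fin n → ℝ}
    (hτ : ∀ i, r i (τ i) + (policyMatrix P τ *ᵥ v) i = onePlayerOp B r P v i) (u : Fin n → ℝ) :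
    onePlayerOp B r P v - onePlayerOp B r P u ≤ policyMatrix P τ *ᵥ (v - u) := fun i => by
  have := le_onePlayerOp (r := r) (P := P) u i (τ i)
  rw [Pi.sub_apply, ← hτ i, mulVec_sub, Pi.sub_apply]
  change _ ≤ _ - ∑ j, P i (τ i) j * u j
  linarith

lemma mulVec_le_onePlayerOp_sub {σ : ∀ i, B i} {u : Fin n → ℝ}
    (hσ : ∀ i, r i (σ i) + (policyMatrix P σ *ᵥ u) i = onePlayerOp B r P u i) (v : Fin n → ℝ) :
    policyMatrix P σ *ᵥ (v - u) ≤ onePlayerOp B r P v - onePlayerOp B r P u := fun i => by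
  have := le_onePlayerOp (r := r) (P := P) v i (σ i)
  rw [Pi.sub_apply, ← hσ i, mulVec_sub, Pi.sub_apply]
  change ∑ j, P i (σ i) j * v j - _ ≤ _
  linarith

lemma isInvProb_and_sum_eq_of_optimal {x m : Fin n → ℝ} {lam : ℝ} {τ : ∀ i, B i}
    (hx : onePlayerOp B r P x = (fun _ => lam) + x)
    (hτ : ∀ i, r i (τ i) + (policyMatrix P τ *ᵥ x) i = onePlayerOp B r P x i)
    (hm : m ∈ stdSimplex ℝ (Fin n)) (hmQ : m ᵥ* policyMatrix P τ = m) :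
    isInvProb (fun i j => P i (τ i) j) m ∧ ∑ i, m i * r i (τ i) = lam :=
  ⟨isInvProb_iff.2 ⟨hm, hmQ⟩,
    dotProduct_eq_of_vecMul_eq_self hm.2 hmQ fun i => (hτ i).trans (congrFun hx i)⟩

end OnePlayer

theorem stmt7_general {n : ℕ}
    (B : Fin n → Type) [∀ i, Fintype (B i)] [∀ i, Nonempty (B i)]
    (r : ∀ i, B i → ℝ) (P : ∀ i, B i → Fin n → ℝ)
    (hP : ∀ i b, (∀ j, 0 ≤ P i b j) ∧ ∑ j, P i b j = 1)
    (T : (Fin n → ℝ) → (Fin n → ℝ)) (hT : T = onePlayerOp B r P)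
    (u : Fin n → ℝ) (lam : ℝ) (h : T u = (fun _ => lam) + u)
    (huniq : ∃! m : Fin n → ℝ,
      ∃ τ : ∀ i, B i, isInvProb (fun i j => P i (τ i) j) m ∧
        (∑ i, m i * r i (τ i)) = lam) :
    ∀ v : Fin n → ℝ, T v = (fun _ => lam) + v → ∃ c : ℝ, v = u + (fun _ => c) := by
  subst hT
  intro v hv
  obtain ⟨m₀, ⟨_, hm₀, -⟩, hm₀_unique⟩ := huniq
  obtain ⟨i₀, -, hi₀⟩ := exists_ne_zero_of_sum_ne_zero (hm₀.2.1.trans_ne one_ne_zero)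
  have : Nonempty (Fin n) := ⟨i₀⟩
  have hdiff : onePlayerOp B r P v - onePlayerOp B r P u = v - u := by
    rw [hv, h]; abel
  obtain ⟨τ, hτ⟩ := exists_policy_onePlayerOp_eq (r := r) (P := P) v
  obtain ⟨σ, hσ⟩ := exists_policy_onePlayerOp_eq (r := r) (P := P) u
  obtain ⟨m₁, hm₁, hm₁Q, hmax⟩ := exists_mem_stdSimplex_vecMul_eq_self_of_le_mulVec
    (policyMatrix_mem_rowStochastic hP τ) (hdiff ▸ onePlayerOp_sub_le_mulVec hτ u)
  obtain ⟨m₂, hm₂, hm₂Q, hmin⟩ := exists_mem_stdSimplex_vecMul_eq_self_of_mulVec_le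
    (policyMatrix_mem_rowStochastic hP σ) (hdiff ▸ mulVec_le_onePlayerOp_sub hσ v)
  obtain rfl := hm₀_unique m₁ ⟨τ, isInvProb_and_sum_eq_of_optimal hv hτ hm₁ hm₁Q⟩
  obtain rfl := hm₀_unique m₂ ⟨σ, isInvProb_and_sum_eq_of_optimal h hσ hm₂ hm₂Q⟩
  refine ⟨v i₀ - u i₀, funext fun j => ?_⟩
  have hj : (v - u) j = (v - u) i₀ := le_antisymm (hmax i₀ hi₀ j) (hmin i₀ hi₀ j)
  simp only [Pi.sub_apply, Pi.add_apply] at hj ⊢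
  linarith

/-- if there is a unique probability vector `m` with `⟨m, r^τ⟩ = λ` and
`m ∈ M(P^τ)` for some deterministic policy `τ`, then the eigenvector of `T` is unique
up to an additive constant. -/
theorem stmt7 {n : ℕ} (hn : 0 < n)
    (B : Fin n → Type) [∀ i, Fintype (B i)] [∀ i, Nonempty (B i)]
    (r : ∀ i, B i → ℝ) (P : ∀ i, B i → Fin n → ℝ)
    (hP : ∀ i b, (∀ j, 0 ≤ P i b j) ∧ ∑ j, P i b j = 1)
    (T : (Fin n → ℝ) → (Fin n → ℝ)) (hT : T = onePlayerOp B r P)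
    (u : Fin n → ℝ) (lam : ℝ) (h : T u = (fun _ => lam) + u)
    (huniq : ∃! m : Fin n → ℝ,
      ∃ τ : ∀ i, B i, isInvProb (fun i j => P i (τ i) j) m ∧
        (∑ i, m i * r i (τ i)) = lam) :
    ∀ v : Fin n → ℝ, T v = (fun _ => lam) + v → ∃ c : ℝ, v = u + (fun _ => c) :=
  stmt7_general B r P hP T hT u lam h huniq
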